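/- arXiv:2103.15360 — 2 statements merged into one kernel-verified Lean document; each statement's English description precedes it below -/
import Mathlib

section
/- Let n ≥ 6 and ν ≥ 1. There exist δ₀ = δ₀(n,ν) > 0 and C = C(n,ν) > 0 such that: if (U_i)_{1≤i≤ν} with U_i = U[z_i,λ_i] is a δ-interacting family with δ < δ₀ and σ = Σ_{i=1}^ν U_i, then for every x ∈ ℝⁿ one has σ(x)^p − Σ_{i=1}^ν U_i(x)^p ≤ C·V(x); equivalently ‖σ^p − Σ_{i=1}^ν U_i^p‖_{**} ≤ C. -/
open MeasureTheory Real
open scoped RealInnerProductSpace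

noncomputable section

abbrev Euc (n : ℕ) := EuclideanSpace ℝ (Fin n)

/-- The Talenti bubble `U[z,λ]`. -/
def bubble (n : ℕ) (z : Euc n) (lam : ℝ) (x : Euc n) : ℝ :=
  ((n : ℝ) * ((n : ℝ) - 2)) ^ (((n : ℝ) - 2) / 4) *
    (lam / (1 + lam ^ 2 * ‖x - z‖ ^ 2)) ^ (((n : ℝ) - 2) / 2)

/-- The critical exponent `p = (n+2)/(n-2)`. -/
def pexp (n : ℕ) : ℝ := ((n : ℝ) + 2) / ((n : ℝ) - 2)

/-- The interaction `q` of two bubbles. -/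
def interq (n : ℕ) (z₁ : Euc n) (l₁ : ℝ) (z₂ : Euc n) (l₂ : ℝ) : ℝ :=
  (l₁ / l₂ + l₂ / l₁ + l₁ * l₂ * ‖z₁ - z₂‖ ^ 2) ^ (-(((n : ℝ) - 2) / 2))

/-- `Q = max_{i ≠ j} q_{ij}`. -/
def interQ (n ν : ℕ) (z : Fin ν → Euc n) (lam : Fin ν → ℝ) : ℝ :=
  ⨆ i, ⨆ j, if i = j then 0 else interq n (z i) (lam i) (z j) (lam j)

/-- The sum of a family of bubbles. -/
def sumB (n ν : ℕ) (z : Fin ν → Euc n) (lam : Fin ν → ℝ) (x : Euc n) : ℝ :=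
  ∑ i, bubble n (z i) (lam i) x

/-- The `L²` norm of the gradient. -/
def gradL2 (n : ℕ) (f : Euc n → ℝ) : ℝ :=
  (∫ x, ‖gradient f x‖ ^ 2) ^ ((1 : ℝ) / 2)

/-- `‖∇u - ∇v‖_{L²}`. -/
def gradDist (n : ℕ) (u v : Euc n → ℝ) : ℝ :=
  (∫ x, ‖gradient u x - gradient v x‖ ^ 2) ^ ((1 : ℝ) / 2)

/-- Membership in `Ḣ¹(ℝⁿ)`. -/
def memH1 (n : ℕ) (u : Euc n → ℝ) : Prop :=
  Differentiable ℝ u ∧ MemLp (fun x => gradient u x) 2 volume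

/-- `Γ(u) = ‖Δu + u|u|^{p-1}‖_{H^{-1}}`. -/
def Gamma (n : ℕ) (u : Euc n → ℝ) : ℝ :=
  sSup { c : ℝ | ∃ φ : Euc n → ℝ, ContDiff ℝ (⊤ : ℕ∞) φ ∧ HasCompactSupport φ ∧
    gradL2 n φ ≤ 1 ∧
    c = ∫ x, (- ⟪gradient u x, gradient φ x⟫ + u x * |u x| ^ (pexp n - 1) * φ x) }

/-- The `H^{-1}` norm of `f`. -/
def H1dualNorm (n : ℕ) (f : Euc n → ℝ) : ℝ :=
  sSup { c : ℝ | ∃ φ : Euc n → ℝ, ContDiff ℝ (⊤ : ℕ∞) φ ∧ HasCompactSupport φ ∧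
    gradL2 n φ ≤ 1 ∧ c = ∫ x, f x * φ x }

/-- The sharp Sobolev constant `S(n)`. -/
def SobolevS (n : ℕ) : ℝ :=
  sSup { c : ℝ | ∀ φ : Euc n → ℝ, ContDiff ℝ (⊤ : ℕ∞) φ → HasCompactSupport φ →
    c * (∫ x, |φ x| ^ (2 * (n : ℝ) / ((n : ℝ) - 2))) ^ (((n : ℝ) - 2) / (2 * (n : ℝ))) ≤
      gradL2 n φ }

/-- `σ = Σ U[z_i, λ_i]` is a best approximation of `u`. -/
def IsBestApprox (n ν : ℕ) (u : Euc n → ℝ) (z : Fin ν → Euc n) (lam : Fin ν → ℝ) : Prop :=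
  (∀ i, 0 < lam i) ∧
  ∀ (z' : Fin ν → Euc n) (lam' : Fin ν → ℝ), (∀ i, 0 < lam' i) →
    gradDist n u (sumB n ν z lam) ≤ gradDist n u (sumB n ν z' lam')

/-- `Z^{n+1} = λ ∂_λ U[z,λ]`. -/
def Zlam (n : ℕ) (z : Euc n) (lam : ℝ) (x : Euc n) : ℝ :=
  lam * deriv (fun l => bubble n z l x) lam

/-- `Z^a = λ^{-1} ∂_{z^a} U[z,λ]`, `1 ≤ a ≤ n`. -/
def Zcen (n : ℕ) (z : Euc n) (lam : ℝ) (a : Fin n) (x : Euc n) : ℝ :=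
  lam⁻¹ * deriv (fun t : ℝ => bubble n (z + t • EuclideanSpace.single a (1 : ℝ)) lam x) 0

/-- The combined family `Z^a`, `1 ≤ a ≤ n+1`. -/
def Zfun (n : ℕ) (z : Euc n) (lam : ℝ) (a : Fin (n + 1)) (x : Euc n) : ℝ :=
  if h : (a : ℕ) < n then Zcen n z lam ⟨a, h⟩ x else Zlam n z lam x

/-- The Laplacian of `f`. -/
def lapl (n : ℕ) (f : Euc n → ℝ) (x : Euc n) : ℝ :=
  ∑ a : Fin n, fderiv ℝ (fun y => fderiv ℝ f y (EuclideanSpace.single a (1 : ℝ))) x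
    (EuclideanSpace.single a (1 : ℝ))

/-- `R_{ij} = max{√(λ_i/λ_j), √(λ_j/λ_i), √(λ_iλ_j)|z_i - z_j|}`. -/
def Rij (n : ℕ) (z₁ : Euc n) (l₁ : ℝ) (z₂ : Euc n) (l₂ : ℝ) : ℝ :=
  max (max (Real.sqrt (l₁ / l₂)) (Real.sqrt (l₂ / l₁))) (Real.sqrt (l₁ * l₂) * ‖z₁ - z₂‖)

/-- `R = (1/2) min_{i ≠ j} R_{ij}`. -/
def Rmin (n ν : ℕ) (z : Fin ν → Euc n) (lam : Fin ν → ℝ) : ℝ :=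
  (1 / 2) * sInf { r : ℝ | ∃ i j, i ≠ j ∧ r = Rij n (z i) (lam i) (z j) (lam j) }

/-- The weight `V`. -/
def Vwt (n ν : ℕ) (z : Fin ν → Euc n) (lam : Fin ν → ℝ) (x : Euc n) : ℝ :=
  ∑ i, (lam i ^ (((n : ℝ) + 2) / 2) * Rmin n ν z lam ^ ((2 : ℝ) - n) /
          (1 + lam i ^ 2 * ‖x - z i‖ ^ 2) ^ (2 : ℝ) *
          (if lam i * ‖x - z i‖ ≤ Rmin n ν z lam then 1 else 0)
      + lam i ^ (((n : ℝ) + 2) / 2) * Rmin n ν z lam ^ (-(4 : ℝ)) /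
          (1 + lam i ^ 2 * ‖x - z i‖ ^ 2) ^ (((n : ℝ) - 2) / 2) *
          (if Rmin n ν z lam / 2 ≤ lam i * ‖x - z i‖ then 1 else 0))

/-- The weight `W`. -/
def Wwt (n ν : ℕ) (z : Fin ν → Euc n) (lam : Fin ν → ℝ) (x : Euc n) : ℝ :=
  ∑ i, (lam i ^ (((n : ℝ) - 2) / 2) * Rmin n ν z lam ^ ((2 : ℝ) - n) /
          (1 + lam i ^ 2 * ‖x - z i‖ ^ 2) ^ (1 : ℝ) *
          (if lam i * ‖x - z i‖ ≤ Rmin n ν z lam then 1 else 0)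
      + lam i ^ (((n : ℝ) - 2) / 2) * Rmin n ν z lam ^ (-(4 : ℝ)) /
          (1 + lam i ^ 2 * ‖x - z i‖ ^ 2) ^ (((n : ℝ) - 4) / 2) *
          (if Rmin n ν z lam / 2 ≤ lam i * ‖x - z i‖ then 1 else 0))

/-- Signed power `t|t|^{q-1}`. -/
def spow (t q : ℝ) : ℝ := t * |t| ^ (q - 1)

/-- The nonlinear projected problem solved by `ρ₀`. -/
def NPP (n ν : ℕ) (z : Fin ν → Euc n) (lam : Fin ν → ℝ) (ρ₀ : Euc n → ℝ)
    (c : Fin ν → Fin (n + 1) → ℝ) : Prop :=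
  (∀ x, lapl n ρ₀ x + (spow (sumB n ν z lam x + ρ₀ x) (pexp n) - sumB n ν z lam x ^ pexp n)
      + (sumB n ν z lam x ^ pexp n - ∑ i, bubble n (z i) (lam i) x ^ pexp n)
      = ∑ i, ∑ a, c i a * bubble n (z i) (lam i) x ^ (pexp n - 1) * Zfun n (z i) (lam i) a x) ∧
  (∀ i a, ∫ x, bubble n (z i) (lam i) x ^ (pexp n - 1) * Zfun n (z i) (lam i) a x * ρ₀ x = 0)

-- convexity/Bernoulli lemma
lemma conv_ineq {u v p : ℝ} (hu : 0 ≤ u) (hv : 0 < v) (huv : u ≤ v) (hp : 1 ≤ p) :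
    v ^ p - u ^ p ≤ p * v ^ (p - 1) * (v - u) := by
  have hvne : v ≠ 0 := hv.ne'
  have h1 : -1 ≤ u / v - 1 := by
    have : 0 ≤ u / v := div_nonneg hu hv.le
    linarith
  have key := one_add_mul_self_le_rpow_one_add h1 hp
  rw [show 1 + (u / v - 1) = u / v by ring] at key
  have hvp : (0:ℝ) < v ^ p := Real.rpow_pos_of_pos hv p
  have key2 : v ^ p * (1 + p * (u / v - 1)) ≤ u ^ p := by
    calc v ^ p * (1 + p * (u / v - 1)) ≤ v ^ p * (u / v) ^ p :=
          mul_le_mul_of_nonneg_left key hvp.le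
      _ = u ^ p := by
          rw [Real.div_rpow hu hv.le]; field_simp
  have hsplit : v ^ (p - 1) * v = v ^ p := by
    have h := (Real.rpow_add_one hvne (p - 1)).symm
    rw [show p - 1 + 1 = p by ring] at h
    exact h
  have hx : v ^ p * (u / v) = v ^ (p - 1) * u := by
    rw [← hsplit]; field_simp
  have e : v ^ p * (1 + p * (u / v - 1)) = v ^ p + p * (v ^ p * (u / v)) - p * v ^ p := by ring
  rw [e, hx] at key2
  nlinarith [key2, hsplit]

-- split rpow
lemma rpow_split {x a : ℝ} (hx : 0 < x) (b : ℝ) : x ^ a = x ^ (a - b) * x ^ b := by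
  rw [← Real.rpow_add hx]; congr 1; ring

-- conversion lemma 1
lemma convV1 {A S ρ N : ℝ} (hA : 0 < A) (hS : 0 < S) (hρ : 0 < ρ) :
    (A / S) ^ (2:ℝ) * (A / ρ ^ 2) ^ ((N - 2) / 2)
      = A ^ ((N + 2) / 2) * ρ ^ ((2:ℝ) - N) / S ^ (2:ℝ) := by
  have hρ2 : (0:ℝ) < ρ ^ 2 := by positivity
  rw [Real.div_rpow hA.le hS.le, Real.div_rpow hA.le hρ2.le]
  rw [div_mul_div_comm, ← Real.rpow_add hA]
  have h1 : ((ρ:ℝ) ^ 2) ^ ((N - 2) / 2) = ρ ^ (N - 2) := by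
    rw [← Real.rpow_natCast ρ 2, ← Real.rpow_mul hρ.le]
    congr 1; push_cast; ring
  rw [h1, show (2:ℝ) + (N - 2) / 2 = (N + 2) / 2 by ring,
    show (2:ℝ) - N = -(N - 2) by ring, Real.rpow_neg hρ.le]
  have h2 : (0:ℝ) < ρ ^ (N - 2) := Real.rpow_pos_of_pos hρ _
  have h3 : (0:ℝ) < S ^ (2:ℝ) := Real.rpow_pos_of_pos hS _
  rw [div_eq_mul_inv, div_eq_mul_inv, mul_inv]
  ring

-- conversion lemma 2
lemma convV2 {A S ρ N : ℝ} (hA : 0 < A) (hS : 0 < S) (hρ : 0 < ρ) :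
    (A / S) ^ ((N - 2) / 2) * (A / ρ ^ 2) ^ (2:ℝ)
      = A ^ ((N + 2) / 2) * ρ ^ (-(4:ℝ)) / S ^ ((N - 2) / 2) := by
  have hρ2 : (0:ℝ) < ρ ^ 2 := by positivity
  rw [Real.div_rpow hA.le hS.le, Real.div_rpow hA.le hρ2.le]
  rw [div_mul_div_comm, ← Real.rpow_add hA]
  have h1 : ((ρ:ℝ) ^ 2) ^ ((2:ℝ)) = ρ ^ ((4:ℝ)) := by
    rw [← Real.rpow_natCast ρ 2, ← Real.rpow_mul hρ.le]
    norm_num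
  rw [h1, show (N - 2) / 2 + 2 = (N + 2) / 2 by ring, Real.rpow_neg hρ.le]
  have h2 : (0:ℝ) < ρ ^ (4:ℝ) := Real.rpow_pos_of_pos hρ _
  have h3 : (0:ℝ) < S ^ ((N - 2) / 2) := Real.rpow_pos_of_pos hS _
  rw [div_eq_mul_inv, div_eq_mul_inv, mul_inv]
  ring

lemma pair_bound {N A B ρ y w : ℝ} (hN : 6 ≤ N) (hA : 0 < A) (hB : 0 < B)
    (hy : 0 ≤ y) (hw : 0 ≤ w) (hρ : 0 < ρ)
    (hH : B / (1 + w ^ 2) ≤ A / (1 + y ^ 2))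
    (hdich : A / (1 + y ^ 2) ≤ B / ρ ^ 2 ∨ B / (1 + w ^ 2) ≤ A / ρ ^ 2) :
    (A / (1 + y ^ 2)) ^ (2:ℝ) * (B / (1 + w ^ 2)) ^ ((N - 2) / 2) ≤
      (A ^ ((N + 2) / 2) * ρ ^ ((2:ℝ) - N) / (1 + y ^ 2) ^ (2:ℝ) * (if y ≤ ρ then 1 else 0)
        + A ^ ((N + 2) / 2) * ρ ^ (-(4:ℝ)) / (1 + y ^ 2) ^ ((N - 2) / 2) *
            (if ρ / 2 ≤ y then 1 else 0))
      + (B ^ ((N + 2) / 2) * ρ ^ ((2:ℝ) - N) / (1 + w ^ 2) ^ (2:ℝ) * (if w ≤ ρ then 1 else 0)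
        + B ^ ((N + 2) / 2) * ρ ^ (-(4:ℝ)) / (1 + w ^ 2) ^ ((N - 2) / 2) *
            (if ρ / 2 ≤ w then 1 else 0)) := by
  set S : ℝ := 1 + y ^ 2 with hSdef
  set T : ℝ := 1 + w ^ 2 with hTdef
  have hS : (0:ℝ) < S := by positivity
  have hT : (0:ℝ) < T := by positivity
  have hAS : (0:ℝ) < A / S := by positivity
  have hBT : (0:ℝ) < B / T := by positivity
  have hAρ : (0:ℝ) < A / ρ ^ 2 := by positivity
  have hBρ : (0:ℝ) < B / ρ ^ 2 := by positivity
  have hm2 : (0:ℝ) ≤ (N - 2) / 2 - 2 := by linarith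
  have hm0 : (0:ℝ) ≤ (N - 2) / 2 := by linarith
  -- nonnegativity of the four summands
  have nn1 : (0:ℝ) ≤ A ^ ((N + 2) / 2) * ρ ^ ((2:ℝ) - N) / S ^ (2:ℝ) *
      (if y ≤ ρ then 1 else 0) := by
    have : (0:ℝ) ≤ (if y ≤ ρ then (1:ℝ) else 0) := by split_ifs <;> norm_num
    positivity
  have nn2 : (0:ℝ) ≤ A ^ ((N + 2) / 2) * ρ ^ (-(4:ℝ)) / S ^ ((N - 2) / 2) *
      (if ρ / 2 ≤ y then 1 else 0) := by
    have : (0:ℝ) ≤ (if ρ / 2 ≤ y then (1:ℝ) else 0) := by split_ifs <;> norm_num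
    positivity
  have nn3 : (0:ℝ) ≤ B ^ ((N + 2) / 2) * ρ ^ ((2:ℝ) - N) / T ^ (2:ℝ) *
      (if w ≤ ρ then 1 else 0) := by
    have : (0:ℝ) ≤ (if w ≤ ρ then (1:ℝ) else 0) := by split_ifs <;> norm_num
    positivity
  have nn4 : (0:ℝ) ≤ B ^ ((N + 2) / 2) * ρ ^ (-(4:ℝ)) / T ^ ((N - 2) / 2) *
      (if ρ / 2 ≤ w then 1 else 0) := by
    have : (0:ℝ) ≤ (if ρ / 2 ≤ w then (1:ℝ) else 0) := by split_ifs <;> norm_num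
    positivity
  rcases hdich with h1 | h2
  · -- A/S ≤ B/ρ², use the B-terms
    by_cases hcase : w ≤ ρ
    · -- claim 3 : LHS ≤ (B/T)^2 * (B/ρ²)^m2
      have core : (A / S) ^ (2:ℝ) * (B / T) ^ ((N - 2) / 2) ≤
          (B / T) ^ (2:ℝ) * (B / ρ ^ 2) ^ ((N - 2) / 2) := by
        have e1 : (B / T) ^ ((N - 2) / 2)
            = (B / T) ^ ((N - 2) / 2 - 2) * (B / T) ^ (2:ℝ) := rpow_split hBT 2
        rw [e1]
        have step1 : (A / S) ^ (2:ℝ) * ((B / T) ^ ((N - 2) / 2 - 2) * (B / T) ^ (2:ℝ))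
            = (B / T) ^ (2:ℝ) * ((A / S) ^ (2:ℝ) * (B / T) ^ ((N - 2) / 2 - 2)) := by ring
        rw [step1]
        have step2 : (A / S) ^ (2:ℝ) * (B / T) ^ ((N - 2) / 2 - 2)
            ≤ (A / S) ^ (2:ℝ) * (A / S) ^ ((N - 2) / 2 - 2) := by
          gcongr
        have step3 : (A / S) ^ (2:ℝ) * (A / S) ^ ((N - 2) / 2 - 2)
            = (A / S) ^ ((N - 2) / 2) := by
          rw [← Real.rpow_add hAS]; congr 1; ring
        have step4 : (A / S) ^ ((N - 2) / 2) ≤ (B / ρ ^ 2) ^ ((N - 2) / 2) :=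
          Real.rpow_le_rpow hAS.le h1 hm0
        have := (step2.trans_eq step3).trans step4
        exact mul_le_mul_of_nonneg_left this (Real.rpow_nonneg hBT.le _)
      rw [convV1 hB hT hρ] at core
      rw [if_pos hcase]
      calc (A / S) ^ (2:ℝ) * (B / T) ^ ((N - 2) / 2)
          ≤ B ^ ((N + 2) / 2) * ρ ^ ((2:ℝ) - N) / T ^ (2:ℝ) * 1 := by
            rw [mul_one]; exact core
        _ ≤ _ := by
            have h := nn4
            have h' := nn1
            have h'' := nn2
            linarith
    · -- claim 4 : LHS ≤ (B/T)^m2 * (B/ρ²)^2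
      have hw2 : ρ / 2 ≤ w := by linarith [not_le.mp hcase]
      have core : (A / S) ^ (2:ℝ) * (B / T) ^ ((N - 2) / 2) ≤
          (B / T) ^ ((N - 2) / 2) * (B / ρ ^ 2) ^ (2:ℝ) := by
        have step : (A / S) ^ (2:ℝ) ≤ (B / ρ ^ 2) ^ (2:ℝ) :=
          Real.rpow_le_rpow hAS.le h1 (by norm_num)
        calc (A / S) ^ (2:ℝ) * (B / T) ^ ((N - 2) / 2)
            ≤ (B / ρ ^ 2) ^ (2:ℝ) * (B / T) ^ ((N - 2) / 2) :=
              mul_le_mul_of_nonneg_right step (Real.rpow_nonneg hBT.le _)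
          _ = (B / T) ^ ((N - 2) / 2) * (B / ρ ^ 2) ^ (2:ℝ) := by ring
      rw [convV2 hB hT hρ] at core
      rw [if_pos hw2]
      calc (A / S) ^ (2:ℝ) * (B / T) ^ ((N - 2) / 2)
          ≤ B ^ ((N + 2) / 2) * ρ ^ (-(4:ℝ)) / T ^ ((N - 2) / 2) * 1 := by
            rw [mul_one]; exact core
        _ ≤ _ := by
            have h := nn3
            have h' := nn1
            have h'' := nn2
            linarith
  · -- B/T ≤ A/ρ², use the A-terms
    by_cases hcase : y ≤ ρ
    · -- claim 1
      have core : (A / S) ^ (2:ℝ) * (B / T) ^ ((N - 2) / 2) ≤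
          (A / S) ^ (2:ℝ) * (A / ρ ^ 2) ^ ((N - 2) / 2) := by
        gcongr
      rw [convV1 hA hS hρ] at core
      rw [if_pos hcase]
      calc (A / S) ^ (2:ℝ) * (B / T) ^ ((N - 2) / 2)
          ≤ A ^ ((N + 2) / 2) * ρ ^ ((2:ℝ) - N) / S ^ (2:ℝ) * 1 := by
            rw [mul_one]; exact core
        _ ≤ _ := by
            have h := nn2
            have h' := nn3
            have h'' := nn4
            linarith
    · -- claim 2
      have hy2 : ρ / 2 ≤ y := by linarith [not_le.mp hcase]
      have core : (A / S) ^ (2:ℝ) * (B / T) ^ ((N - 2) / 2) ≤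
          (A / S) ^ ((N - 2) / 2) * (A / ρ ^ 2) ^ (2:ℝ) := by
        have e1 : (B / T) ^ ((N - 2) / 2)
            = (B / T) ^ ((N - 2) / 2 - 2) * (B / T) ^ (2:ℝ) := rpow_split hBT 2
        have e2 : (A / S) ^ ((N - 2) / 2)
            = (A / S) ^ ((N - 2) / 2 - 2) * (A / S) ^ (2:ℝ) := rpow_split hAS 2
        rw [e1, e2]
        have s1 : (B / T) ^ ((N - 2) / 2 - 2) ≤ (A / S) ^ ((N - 2) / 2 - 2) :=
          Real.rpow_le_rpow hBT.le hH hm2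
        have s2 : (B / T) ^ (2:ℝ) ≤ (A / ρ ^ 2) ^ (2:ℝ) :=
          Real.rpow_le_rpow hBT.le h2 (by norm_num)
        calc (A / S) ^ (2:ℝ) * ((B / T) ^ ((N - 2) / 2 - 2) * (B / T) ^ (2:ℝ))
            ≤ (A / S) ^ (2:ℝ) * ((A / S) ^ ((N - 2) / 2 - 2) * (A / ρ ^ 2) ^ (2:ℝ)) := by
              gcongr
          _ = (A / S) ^ ((N - 2) / 2 - 2) * (A / S) ^ (2:ℝ) * (A / ρ ^ 2) ^ (2:ℝ) := by ring
      rw [convV2 hA hS hρ] at core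
      rw [if_pos hy2]
      calc (A / S) ^ (2:ℝ) * (B / T) ^ ((N - 2) / 2)
          ≤ A ^ ((N + 2) / 2) * ρ ^ (-(4:ℝ)) / S ^ ((N - 2) / 2) * 1 := by
            rw [mul_one]; exact core
        _ ≤ _ := by
            have h := nn1
            have h' := nn3
            have h'' := nn4
            linarith

lemma sqrtAB_mul {A B r : ℝ} (hA : 0 < A) (hB : 0 ≤ B) (hr : 0 ≤ r) :
    Real.sqrt (A * B) * r = Real.sqrt (B / A) * (A * r) := by
  have e : A * B = (B / A) * A ^ 2 := by field_simp
  rw [e, Real.sqrt_mul (by positivity), Real.sqrt_sq hA.le]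
  ring

lemma one_le_sqrt_one_add_sq (y : ℝ) : 1 ≤ Real.sqrt (1 + y ^ 2) := by
  rw [show (1:ℝ) = Real.sqrt 1 by simp]
  apply Real.sqrt_le_sqrt
  nlinarith [Real.sq_sqrt (by norm_num : (0:ℝ) ≤ 1), Real.sqrt_nonneg (1:ℝ)]

lemma self_le_sqrt_one_add_sq {y : ℝ} (hy : 0 ≤ y) : y ≤ Real.sqrt (1 + y ^ 2) := by
  nlinarith [Real.sq_sqrt (show (0:ℝ) ≤ 1 + y ^ 2 by positivity),
    Real.sqrt_nonneg (1 + y ^ 2)]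

lemma dich {A B ρ y w D : ℝ} (hA : 0 < A) (hB : 0 < B) (hρ : 0 < ρ)
    (hy : 0 ≤ y) (hw : 0 ≤ w)
    (hD : D ≤ y / A + w / B)
    (hR : 2 * ρ ≤ max (max (Real.sqrt (A / B)) (Real.sqrt (B / A))) (Real.sqrt (A * B) * D)) :
    A / (1 + y ^ 2) ≤ B / ρ ^ 2 ∨ B / (1 + w ^ 2) ≤ A / ρ ^ 2 := by
  set t : ℝ := Real.sqrt (B / A) with htdef
  set s : ℝ := Real.sqrt (A / B) with hsdef
  set sS : ℝ := Real.sqrt (1 + y ^ 2) with hsSdef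
  set sT : ℝ := Real.sqrt (1 + w ^ 2) with hsTdef
  have ht0 : 0 ≤ t := Real.sqrt_nonneg _
  have hs0 : 0 ≤ s := Real.sqrt_nonneg _
  have hsS1 : 1 ≤ sS := one_le_sqrt_one_add_sq y
  have hsT1 : 1 ≤ sT := one_le_sqrt_one_add_sq w
  have h1 : t ≤ t * sS := le_mul_of_one_le_right ht0 hsS1
  have h2 : s ≤ s * sT := le_mul_of_one_le_right hs0 hsT1
  have h3 : Real.sqrt (A * B) * D ≤ t * sS + s * sT := by
    have hD0 : 0 ≤ y / A + w / B := by positivity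
    calc Real.sqrt (A * B) * D ≤ Real.sqrt (A * B) * (y / A + w / B) := by
          rcases le_or_gt 0 D with h | h
          · exact mul_le_mul_of_nonneg_left hD (Real.sqrt_nonneg _)
          · nlinarith [Real.sqrt_nonneg (A * B)]
      _ = Real.sqrt (A * B) * (y / A) + Real.sqrt (A * B) * (w / B) := by ring
      _ = t * y + s * w := by
          have ey : A * (y / A) = y := by field_simp
          have ew : B * (w / B) = w := by field_simp
          rw [show Real.sqrt (A * B) * (y / A) = t * y by
              have h := sqrtAB_mul hA hB.le (r := y / A) (by positivity)
              rw [h, ey],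
            show Real.sqrt (A * B) * (w / B) = s * w by
              have e : A * B = B * A := by ring
              rw [e]
              have h := sqrtAB_mul hB hA.le (r := w / B) (by positivity)
              rw [h, ew]]
      _ ≤ t * sS + s * sT := by
          have := self_le_sqrt_one_add_sq hy
          have := self_le_sqrt_one_add_sq hw
          gcongr
  have hsum : 2 * ρ ≤ t * sS + s * sT := by
    refine hR.trans (max_le (max_le ?_ ?_) h3)
    · exact h2.trans (by linarith [mul_nonneg ht0 (by linarith : (0:ℝ) ≤ sS)])
    · exact h1.trans (by linarith [mul_nonneg hs0 (by linarith : (0:ℝ) ≤ sT)])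
  rcases le_or_gt ρ (t * sS) with h | h
  · left
    have hsq : ρ ^ 2 ≤ (B / A) * (1 + y ^ 2) := by
      have h' : ρ ^ 2 ≤ (t * sS) ^ 2 := by nlinarith
      have e : (t * sS) ^ 2 = (B / A) * (1 + y ^ 2) := by
        rw [mul_pow, Real.sq_sqrt (by positivity : (0:ℝ) ≤ B / A),
          Real.sq_sqrt (by positivity : (0:ℝ) ≤ 1 + y ^ 2)]
      linarith [e ▸ h']
    rw [div_le_div_iff₀ (by positivity) (by positivity)]
    calc A * ρ ^ 2 ≤ A * ((B / A) * (1 + y ^ 2)) := by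
          exact mul_le_mul_of_nonneg_left hsq hA.le
      _ = B * (1 + y ^ 2) := by field_simp
  · right
    have h' : ρ ≤ s * sT := by linarith
    have hsq : ρ ^ 2 ≤ (A / B) * (1 + w ^ 2) := by
      have h'' : ρ ^ 2 ≤ (s * sT) ^ 2 := by nlinarith
      have e : (s * sT) ^ 2 = (A / B) * (1 + w ^ 2) := by
        rw [mul_pow, Real.sq_sqrt (by positivity : (0:ℝ) ≤ A / B),
          Real.sq_sqrt (by positivity : (0:ℝ) ≤ 1 + w ^ 2)]
      linarith [e ▸ h'']
    rw [div_le_div_iff₀ (by positivity) (by positivity)]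
    calc B * ρ ^ 2 ≤ B * ((A / B) * (1 + w ^ 2)) := by
          exact mul_le_mul_of_nonneg_left hsq hB.le
      _ = A * (1 + w ^ 2) := by field_simp

/-- the interaction term `σ^p - Σ U_i^p` is bounded by the weight `V`. -/
theorem stmt5 (n ν : ℕ) (hn : 6 ≤ n) (hν : 1 ≤ ν) :
    ∃ δ₀ C : ℝ, 0 < δ₀ ∧ 0 < C ∧
      ∀ (z : Fin ν → Euc n) (lam : Fin ν → ℝ), (∀ i, 0 < lam i) →
        ∀ δ : ℝ, δ < δ₀ → interQ n ν z lam < δ →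
        ∀ x, sumB n ν z lam x ^ pexp n - (∑ i, bubble n (z i) (lam i) x ^ pexp n) ≤
          C * Vwt n ν z lam x := by
  have hN6 : (6:ℝ) ≤ (n:ℝ) := by exact_mod_cast hn
  have hN2 : (0:ℝ) < (n:ℝ) - 2 := by linarith
  have hcbase : (0:ℝ) < (n:ℝ) * ((n:ℝ) - 2) := by nlinarith
  set c : ℝ := ((n:ℝ) * ((n:ℝ) - 2)) ^ (((n:ℝ) - 2) / 4) with hcdef
  have hc : 0 < c := Real.rpow_pos_of_pos hcbase _
  have hp1 : 1 ≤ pexp n := by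
    rw [pexp, le_div_iff₀ hN2]; linarith
  have hppos : (0:ℝ) < pexp n := by linarith
  have hνpos : (0:ℝ) < (ν:ℝ) := by exact_mod_cast Nat.lt_of_lt_of_le Nat.zero_lt_one hν
  have hm2pos : (0:ℝ) < ((n:ℝ) - 2) / 2 := by linarith
  refine ⟨1, pexp n * (ν:ℝ) ^ (pexp n - 1) * (ν:ℝ) * (2 * c ^ pexp n), one_pos, ?_, ?_⟩
  · have h1 : (0:ℝ) < (ν:ℝ) ^ (pexp n - 1) := Real.rpow_pos_of_pos hνpos _
    have h2 : (0:ℝ) < c ^ pexp n := Real.rpow_pos_of_pos hc _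
    positivity
  intro z lam hlam δ hδ hQ x
  -- basic notation
  set ρ : ℝ := Rmin n ν z lam with hρdef
  set f : Fin ν → ℝ := fun i => bubble n (z i) (lam i) x with hfdef
  set yv : Fin ν → ℝ := fun i => lam i * ‖x - z i‖ with hyvdef
  have hyv0 : ∀ i, 0 ≤ yv i := fun i => mul_nonneg (hlam i).le (norm_nonneg _)
  have hSpos : ∀ i, (0:ℝ) < 1 + yv i ^ 2 := fun i => by positivity
  have hfval : ∀ i, f i = c * (lam i / (1 + yv i ^ 2)) ^ (((n:ℝ) - 2) / 2) := by
    intro i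
    show bubble n (z i) (lam i) x = _
    rw [bubble, hcdef]
    congr 3
    rw [mul_pow]
  have hEpos : ∀ i, (0:ℝ) < lam i / (1 + yv i ^ 2) := fun i =>
    div_pos (hlam i) (hSpos i)
  have hfpos : ∀ i, 0 < f i := fun i => by
    rw [hfval i]; exact mul_pos hc (Real.rpow_pos_of_pos (hEpos i) _)
  -- the W summands of Vwt
  set W : Fin ν → ℝ := fun i =>
    lam i ^ (((n:ℝ) + 2) / 2) * ρ ^ ((2:ℝ) - n) / (1 + yv i ^ 2) ^ (2:ℝ) *
      (if yv i ≤ ρ then 1 else 0)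
    + lam i ^ (((n:ℝ) + 2) / 2) * ρ ^ (-(4:ℝ)) / (1 + yv i ^ 2) ^ (((n:ℝ) - 2) / 2) *
      (if ρ / 2 ≤ yv i then 1 else 0) with hWdef
  -- Rmin facts
  set Sset : Set ℝ := {r : ℝ | ∃ i j, i ≠ j ∧ r = Rij n (z i) (lam i) (z j) (lam j)}
    with hSsetdef
  have hRijpos : ∀ i j, 0 < Rij n (z i) (lam i) (z j) (lam j) := by
    intro i j
    have h : 0 < Real.sqrt (lam i / lam j) := Real.sqrt_pos.2 (div_pos (hlam i) (hlam j))
    refine lt_of_lt_of_le h ?_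
    rw [Rij]
    exact le_trans (le_max_left _ _) (le_max_left _ _)
  have hfin : Sset.Finite := by
    refine Set.Finite.subset (Set.finite_range
      (fun p : Fin ν × Fin ν => Rij n (z p.1) (lam p.1) (z p.2) (lam p.2))) ?_
    rintro r ⟨i, j, -, rfl⟩
    exact ⟨(i, j), rfl⟩
  have hρ0 : 0 ≤ ρ := by
    have hρeq : ρ = (1/2) * sInf Sset := rfl
    rcases Set.eq_empty_or_nonempty Sset with he | hnemp
    · rw [hρeq, he, Real.sInf_empty]; norm_num
    · obtain ⟨i0, j0, -, heq⟩ := hnemp.csInf_mem hfin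
      have := hRijpos i0 j0
      rw [hρeq, heq]; linarith
  have hVeq : Vwt n ν z lam x = ∑ i, W i := by
    rw [Vwt]
    refine Finset.sum_congr rfl fun i _ => ?_
    rw [hWdef]
    simp only [← mul_pow]; rfl
  have hWnonneg : ∀ i, 0 ≤ W i := by
    intro i
    rw [hWdef]
    have h1 : (0:ℝ) ≤ (if yv i ≤ ρ then (1:ℝ) else 0) := by split_ifs <;> norm_num
    have h2 : (0:ℝ) ≤ (if ρ / 2 ≤ yv i then (1:ℝ) else 0) := by split_ifs <;> norm_num
    have h3 := hSpos i
    have h4 := hlam i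
    have h5 : (0:ℝ) ≤ ρ ^ ((2:ℝ) - n) := Real.rpow_nonneg hρ0 _
    have h6 : (0:ℝ) ≤ ρ ^ (-(4:ℝ)) := Real.rpow_nonneg hρ0 _
    have h7 : (0:ℝ) ≤ (1 + yv i ^ 2) ^ (2:ℝ) := Real.rpow_nonneg h3.le _
    have h8 : (0:ℝ) ≤ (1 + yv i ^ 2) ^ (((n:ℝ) - 2) / 2) := Real.rpow_nonneg h3.le _
    have h9 : (0:ℝ) ≤ lam i ^ (((n:ℝ) + 2) / 2) := Real.rpow_nonneg h4.le _
    positivity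
  have hVnonneg : 0 ≤ Vwt n ν z lam x := by
    rw [hVeq]; exact Finset.sum_nonneg fun i _ => hWnonneg i
  have hWleV : ∀ i, W i ≤ Vwt n ν z lam x := by
    intro i
    rw [hVeq]
    exact Finset.single_le_sum (fun j _ => hWnonneg j) (Finset.mem_univ i)
  -- max bubble
  have hne : (Finset.univ : Finset (Fin ν)).Nonempty := ⟨⟨0, hν⟩, Finset.mem_univ _⟩
  obtain ⟨I, -, hImax⟩ := Finset.exists_max_image Finset.univ f hne
  have hσpos : 0 < ∑ i, f i := Finset.sum_pos (fun i _ => hfpos i) hne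
  have hBIσ : f I ≤ ∑ i, f i :=
    Finset.single_le_sum (fun i _ => (hfpos i).le) (Finset.mem_univ I)
  have step1 : (∑ i, f i) ^ pexp n - f I ^ pexp n ≤
      pexp n * (∑ i, f i) ^ (pexp n - 1) * ((∑ i, f i) - f I) :=
    conv_ineq (hfpos I).le hσpos hBIσ hp1
  have hsum_ge : f I ^ pexp n ≤ ∑ i, f i ^ pexp n :=
    Finset.single_le_sum (fun i _ => Real.rpow_nonneg (hfpos i).le _) (Finset.mem_univ I)
  have hσν : ∑ i, f i ≤ (ν:ℝ) * f I := by
    calc ∑ i, f i ≤ ∑ _i : Fin ν, f I :=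
          Finset.sum_le_sum fun i _ => hImax i (Finset.mem_univ i)
      _ = (ν:ℝ) * f I := by
          rw [Finset.sum_const, Finset.card_univ, Fintype.card_fin, nsmul_eq_mul]
  have step2 : (∑ i, f i) ^ (pexp n - 1) ≤ (ν:ℝ) ^ (pexp n - 1) * f I ^ (pexp n - 1) := by
    calc (∑ i, f i) ^ (pexp n - 1) ≤ ((ν:ℝ) * f I) ^ (pexp n - 1) :=
          Real.rpow_le_rpow hσpos.le hσν (by linarith)
      _ = (ν:ℝ) ^ (pexp n - 1) * f I ^ (pexp n - 1) :=
          Real.mul_rpow hνpos.le (hfpos I).le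
  -- rewrite f I ^ (pexp n - 1)
  have hfIp : f I ^ (pexp n - 1) =
      c ^ (pexp n - 1) * (lam I / (1 + yv I ^ 2)) ^ (2:ℝ) := by
    rw [hfval I, Real.mul_rpow hc.le (Real.rpow_nonneg (hEpos I).le _),
      ← Real.rpow_mul (hEpos I).le]
    congr 2
    rw [pexp]
    field_simp
    ring
  -- key pairwise estimate
  have key : ∀ k ∈ Finset.univ.erase I,
      f I ^ (pexp n - 1) * f k ≤ c ^ pexp n * (2 * Vwt n ν z lam x) := by
    intro k hk
    have hkI : k ≠ I := Finset.ne_of_mem_erase hk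
    -- Rmin facts
    have hmem : Rij n (z I) (lam I) (z k) (lam k) ∈ Sset :=
      ⟨I, k, fun h => hkI h.symm, rfl⟩
    have hnemp : Sset.Nonempty := ⟨_, hmem⟩
    have hρeq : ρ = (1/2) * sInf Sset := rfl
    have hρpos : 0 < ρ := by
      obtain ⟨i0, j0, -, heq⟩ := hnemp.csInf_mem hfin
      have := hRijpos i0 j0
      rw [hρeq, heq]; linarith
    have hρle : 2 * ρ ≤ Rij n (z I) (lam I) (z k) (lam k) := by
      have := csInf_le hfin.bddBelow hmem
      rw [hρeq]; linarith
    -- triangle inequality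
    have htri : ‖z I - z k‖ ≤ yv I / lam I + yv k / lam k := by
      have h1 : ‖z I - z k‖ ≤ ‖z I - x‖ + ‖x - z k‖ := by
        have := dist_triangle (z I) x (z k)
        simpa [dist_eq_norm] using this
      have h2 : ‖z I - x‖ = ‖x - z I‖ := norm_sub_rev _ _
      have h3 : yv I / lam I = ‖x - z I‖ := by
        show lam I * ‖x - z I‖ / lam I = ‖x - z I‖
        exact mul_div_cancel_left₀ _ (hlam I).ne'
      have h4 : yv k / lam k = ‖x - z k‖ := by
        show lam k * ‖x - z k‖ / lam k = ‖x - z k‖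
        exact mul_div_cancel_left₀ _ (hlam k).ne' 
      rw [h3, h4]
      linarith
    -- dichotomy
    have hdi := dich (hlam I) (hlam k) hρpos (hyv0 I) (hyv0 k) htri
      (by rw [Rij] at hρle; exact hρle)
    -- ordering hypothesis
    have hH : lam k / (1 + yv k ^ 2) ≤ lam I / (1 + yv I ^ 2) := by
      have h := hImax k (Finset.mem_univ k)
      rw [hfval k, hfval I] at h
      have h2 : (lam k / (1 + yv k ^ 2)) ^ (((n:ℝ) - 2) / 2) ≤
          (lam I / (1 + yv I ^ 2)) ^ (((n:ℝ) - 2) / 2) :=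
        le_of_mul_le_mul_left h hc
      exact (Real.rpow_le_rpow_iff (hEpos k).le (hEpos I).le hm2pos).1 h2
    have hpb := pair_bound hN6 (hlam I) (hlam k) (hyv0 I) (hyv0 k) hρpos hH hdi
    -- assemble
    have hprod : f I ^ (pexp n - 1) * f k =
        c ^ pexp n * ((lam I / (1 + yv I ^ 2)) ^ (2:ℝ) *
          (lam k / (1 + yv k ^ 2)) ^ (((n:ℝ) - 2) / 2)) := by
      rw [hfIp, hfval k]
      have hcc : c ^ (pexp n - 1) * c = c ^ pexp n := by
        have h := (Real.rpow_add_one hc.ne' (pexp n - 1)).symm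
        rw [show pexp n - 1 + 1 = pexp n by ring] at h
        exact h
      rw [← hcc]; ring
    have hWIk : ((lam I) ^ (((n:ℝ) + 2) / 2) * ρ ^ ((2:ℝ) - n) /
          (1 + yv I ^ 2) ^ (2:ℝ) * (if yv I ≤ ρ then 1 else 0)
        + (lam I) ^ (((n:ℝ) + 2) / 2) * ρ ^ (-(4:ℝ)) /
          (1 + yv I ^ 2) ^ (((n:ℝ) - 2) / 2) * (if ρ / 2 ≤ yv I then 1 else 0))
        + ((lam k) ^ (((n:ℝ) + 2) / 2) * ρ ^ ((2:ℝ) - n) /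
          (1 + yv k ^ 2) ^ (2:ℝ) * (if yv k ≤ ρ then 1 else 0)
        + (lam k) ^ (((n:ℝ) + 2) / 2) * ρ ^ (-(4:ℝ)) /
          (1 + yv k ^ 2) ^ (((n:ℝ) - 2) / 2) * (if ρ / 2 ≤ yv k then 1 else 0))
        = W I + W k := by
      rw [hWdef]
    rw [hprod]
    calc c ^ pexp n * ((lam I / (1 + yv I ^ 2)) ^ (2:ℝ) *
          (lam k / (1 + yv k ^ 2)) ^ (((n:ℝ) - 2) / 2))
        ≤ c ^ pexp n * (W I + W k) := by
          refine mul_le_mul_of_nonneg_left ?_ (Real.rpow_nonneg hc.le _)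
          rw [← hWIk]
          exact hpb
      _ ≤ c ^ pexp n * (2 * Vwt n ν z lam x) := by
          refine mul_le_mul_of_nonneg_left ?_ (Real.rpow_nonneg hc.le _)
          have := hWleV I
          have := hWleV k
          linarith
  -- sum up
  have herase : (∑ i, f i) - f I = ∑ k ∈ Finset.univ.erase I, f k := by
    rw [Finset.sum_erase_eq_sub (Finset.mem_univ I)]
  have step3 : f I ^ (pexp n - 1) * ((∑ i, f i) - f I) ≤
      (ν:ℝ) * (c ^ pexp n * (2 * Vwt n ν z lam x)) := by
    rw [herase, Finset.mul_sum]
    calc ∑ k ∈ Finset.univ.erase I, f I ^ (pexp n - 1) * f k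
        ≤ ∑ _k ∈ Finset.univ.erase I, c ^ pexp n * (2 * Vwt n ν z lam x) :=
          Finset.sum_le_sum key
      _ = ((Finset.univ.erase I).card : ℝ) * (c ^ pexp n * (2 * Vwt n ν z lam x)) := by
          rw [Finset.sum_const, nsmul_eq_mul]
      _ ≤ (ν:ℝ) * (c ^ pexp n * (2 * Vwt n ν z lam x)) := by
          refine mul_le_mul_of_nonneg_right ?_ ?_
          · have hcard : (Finset.univ.erase I).card ≤ ν := by
              calc (Finset.univ.erase I).card ≤ (Finset.univ : Finset (Fin ν)).card :=
                    Finset.card_le_card (Finset.erase_subset _ _)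
                _ = ν := by rw [Finset.card_univ, Fintype.card_fin]
            exact_mod_cast hcard
          · have : (0:ℝ) < c ^ pexp n := Real.rpow_pos_of_pos hc _
            nlinarith
  -- final chain
  show (∑ i, f i) ^ pexp n - (∑ i, f i ^ pexp n) ≤ _ * Vwt n ν z lam x
  have hdiff0 : 0 ≤ (∑ i, f i) - f I := by linarith
  have main : (∑ i, f i) ^ pexp n - (∑ i, f i ^ pexp n) ≤
      pexp n * ((ν:ℝ) ^ (pexp n - 1) * f I ^ (pexp n - 1)) * ((∑ i, f i) - f I) := by
    have h1 : (∑ i, f i) ^ pexp n - (∑ i, f i ^ pexp n) ≤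
        pexp n * (∑ i, f i) ^ (pexp n - 1) * ((∑ i, f i) - f I) := by linarith
    have h2 : pexp n * (∑ i, f i) ^ (pexp n - 1) * ((∑ i, f i) - f I) ≤
        pexp n * ((ν:ℝ) ^ (pexp n - 1) * f I ^ (pexp n - 1)) * ((∑ i, f i) - f I) := by
      refine mul_le_mul_of_nonneg_right ?_ hdiff0
      exact mul_le_mul_of_nonneg_left step2 hppos.le
    linarith
  have hν1 : (0:ℝ) ≤ (ν:ℝ) ^ (pexp n - 1) := Real.rpow_nonneg hνpos.le _
  calc (∑ i, f i) ^ pexp n - (∑ i, f i ^ pexp n)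
      ≤ pexp n * ((ν:ℝ) ^ (pexp n - 1) * f I ^ (pexp n - 1)) * ((∑ i, f i) - f I) := main
    _ = pexp n * (ν:ℝ) ^ (pexp n - 1) *
        (f I ^ (pexp n - 1) * ((∑ i, f i) - f I)) := by ring
    _ ≤ pexp n * (ν:ℝ) ^ (pexp n - 1) *
        ((ν:ℝ) * (c ^ pexp n * (2 * Vwt n ν z lam x))) := by
          refine mul_le_mul_of_nonneg_left step3 ?_
          positivity
    _ = pexp n * (ν:ℝ) ^ (pexp n - 1) * (ν:ℝ) * (2 * c ^ pexp n) * Vwt n ν z lam x := by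
          ring


end
end

section
/- Let p ∈ (1,2], ν ≥ 1, and let a₁,…,a_ν ≥ 0 be non-negative real numbers. Then (Σ_{i=1}^ν a_i)^p − Σ_{i=1}^ν a_i^p ≤ Σ_{i≠j} [ (a_i + a_j)^p − a_i^p − a_j^p ], where the sum on the right is over ordered pairs (i,j) with i ≠ j; equality holds when at most one of the a_i is non-zero. -/
open MeasureTheory Real
open scoped RealInnerProductSpace

noncomputable section

/-- Concavity increments: for `q ∈ (0,1]`, `(b+c)^q - b^q ≤ (a+c)^q - a^q`. -/
lemma incr_rpow {q : ℝ} (hq0 : 0 < q) (hq1 : q ≤ 1) {a b c : ℝ}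
    (ha : 0 ≤ a) (hab : a ≤ b) (hc : 0 ≤ c) :
    (b + c) ^ q - b ^ q ≤ (a + c) ^ q - a ^ q := by
  have hcont : Continuous fun t : ℝ => (t + c) ^ q - t ^ q := by
    apply Continuous.sub
    · exact (continuous_id.add continuous_const).rpow_const fun x => Or.inr hq0.le
    · exact continuous_id.rpow_const fun x => Or.inr hq0.le
  have hderiv : ∀ t : ℝ, 0 < t →
      HasDerivAt (fun t : ℝ => (t + c) ^ q - t ^ q)
        (q * (t + c) ^ (q - 1) * 1 - q * t ^ (q - 1)) t := by
    intro t ht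
    have h1 : HasDerivAt (fun t : ℝ => (t + c) ^ q) (q * (t + c) ^ (q - 1) * 1) t := by
      have := (Real.hasDerivAt_rpow_const
        (x := t + c) (p := q) (Or.inl (by positivity))).comp t
        ((hasDerivAt_id t).add_const c)
      simpa [Function.comp_def] using this
    exact h1.sub (Real.hasDerivAt_rpow_const (Or.inl ht.ne'))
  have hanti : AntitoneOn (fun t : ℝ => (t + c) ^ q - t ^ q) (Set.Ici 0) := by
    apply antitoneOn_of_deriv_nonpos (convex_Ici 0) hcont.continuousOn
    · intro t ht
      rw [interior_Ici] at ht
      exact (hderiv t ht).differentiableAt.differentiableWithinAt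
    · intro t ht
      rw [interior_Ici] at ht
      rw [(hderiv t ht).deriv]
      have hle : (t + c) ^ (q - 1) ≤ t ^ (q - 1) :=
        Real.rpow_le_rpow_of_nonpos ht (by linarith) (by linarith)
      nlinarith
  exact hanti ha (le_trans ha hab) hab

/-- Key three-variable inequality for `p ∈ (1,2]`. -/
lemma key3 {p : ℝ} (hp1 : 1 < p) (hp2 : p ≤ 2) {A x y : ℝ}
    (hA : 0 ≤ A) (hx : 0 ≤ x) (hy : 0 ≤ y) :
    (A + x + y) ^ p + x ^ p + y ^ p + A ^ p ≤ (A + x) ^ p + (A + y) ^ p + (x + y) ^ p := by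
  have hp0 : 0 < p := lt_trans zero_lt_one hp1
  set H : ℝ → ℝ := fun t =>
    (t + x) ^ p + (t + y) ^ p + (x + y) ^ p - (t + x + y) ^ p - t ^ p - x ^ p - y ^ p with hH
  have hcont : Continuous H := by
    have c1 : ∀ c : ℝ, Continuous fun t : ℝ => (t + c) ^ p := fun c =>
      (continuous_id.add continuous_const).rpow_const fun _ => Or.inr hp0.le
    have c0 : Continuous fun t : ℝ => t ^ p :=
      continuous_id.rpow_const fun _ => Or.inr hp0.le
    have c2 : Continuous fun t : ℝ => (t + x + y) ^ p := by
      have := ((continuous_id.add continuous_const).add continuous_const).rpow_const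
        (f := fun t : ℝ => t + x + y) (p := p) fun _ => Or.inr hp0.le
      exact this
    exact ((((((c1 x).add (c1 y)).add continuous_const).sub c2).sub c0).sub
      continuous_const).sub continuous_const
  have hderiv : ∀ t : ℝ, 0 < t →
      HasDerivAt H
        (p * (t + x) ^ (p - 1) * 1 + p * (t + y) ^ (p - 1) * 1
          - p * (t + x + y) ^ (p - 1) * 1 - p * t ^ (p - 1)) t := by
    intro t ht
    have d1 : ∀ c : ℝ, 0 ≤ c → HasDerivAt (fun t : ℝ => (t + c) ^ p)
        (p * (t + c) ^ (p - 1) * 1) t := by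
      intro c hc
      have := (Real.hasDerivAt_rpow_const
        (x := t + c) (p := p) (Or.inl (by positivity))).comp t
        ((hasDerivAt_id t).add_const c)
      simpa [Function.comp_def] using this
    have d2 : HasDerivAt (fun t : ℝ => (t + x + y) ^ p)
        (p * (t + x + y) ^ (p - 1) * 1) t := by
      have := (Real.hasDerivAt_rpow_const
        (x := t + x + y) (p := p) (Or.inl (by positivity))).comp t
        (((hasDerivAt_id t).add_const x).add_const y)
      simpa [Function.comp_def] using this
    have d0 : HasDerivAt (fun t : ℝ => t ^ p) (p * t ^ (p - 1)) t :=
      Real.hasDerivAt_rpow_const (Or.inl ht.ne')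
    have := ((((((d1 x hx).add (d1 y hy)).add_const ((x + y) ^ p)).sub d2).sub d0).sub_const
      (x ^ p)).sub_const (y ^ p)
    exact this
  have hmono : MonotoneOn H (Set.Ici 0) := by
    apply monotoneOn_of_deriv_nonneg (convex_Ici 0) hcont.continuousOn
    · intro t ht
      rw [interior_Ici] at ht
      exact (hderiv t ht).differentiableAt.differentiableWithinAt
    · intro t ht
      rw [interior_Ici] at ht
      rw [(hderiv t ht).deriv]
      have hq0 : (0:ℝ) < p - 1 := by linarith
      have hq1 : p - 1 ≤ 1 := by linarith
      have := incr_rpow hq0 hq1 (a := t) (b := t + y) (c := x) ht.le (by linarith) hx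
      have he : t + y + x = t + x + y := by ring
      rw [he] at this
      nlinarith
  have h0 : H 0 = 0 := by
    simp [hH, Real.zero_rpow hp0.ne']
  have := hmono (Set.self_mem_Ici) (Set.mem_Ici.mpr hA) hA
  rw [h0] at this
  simp only [hH] at this
  linarith

/-- Bracket nonnegativity: `x^p + y^p ≤ (x+y)^p` for `p ≥ 1`. -/
lemma bracket_nonneg {p : ℝ} (hp1 : 1 ≤ p) {x y : ℝ} (hx : 0 ≤ x) (hy : 0 ≤ y) :
    x ^ p + y ^ p ≤ (x + y) ^ p := by
  have hp0 : (0:ℝ) < p := lt_of_lt_of_le zero_lt_one hp1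
  rcases eq_or_lt_of_le (by positivity : (0:ℝ) ≤ x + y) with h | h
  · have hx0 : x = 0 := by linarith
    have hy0 : y = 0 := by linarith
    simp [hx0, hy0, Real.zero_rpow hp0.ne']
  · have key : ∀ z : ℝ, 0 ≤ z → z ≤ x + y → z ^ p ≤ (x + y) ^ (p - 1) * z := by
      intro z hz hzle
      rcases eq_or_lt_of_le hz with h0 | h0
      · simp [← h0, Real.zero_rpow hp0.ne']
      · have : z ^ p = z ^ (p - 1) * z := by
          rw [← Real.rpow_add_one h0.ne' (p - 1)]; ring_nf
        rw [this]
        have := Real.rpow_le_rpow h0.le hzle (by linarith : (0:ℝ) ≤ p - 1)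
        nlinarith
    have h1 := key x hx (by linarith)
    have h2 := key y hy (by linarith)
    have h3 : (x + y) ^ (p - 1) * (x + y) = (x + y) ^ p := by
      rw [← Real.rpow_add_one h.ne' (p - 1)]; ring_nf
    nlinarith

/-- Subadditivity of `x ↦ (A+x)^p - x^p - A^p` over finite sums. -/
lemma gsum {p : ℝ} (hp1 : 1 < p) (hp2 : p ≤ 2) {ι : Type*} (s : Finset ι)
    (a : ι → ℝ) (ha : ∀ i ∈ s, 0 ≤ a i) {A : ℝ} (hA : 0 ≤ A) :
    (A + ∑ i ∈ s, a i) ^ p - (∑ i ∈ s, a i) ^ p - A ^ p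
      ≤ ∑ i ∈ s, ((A + a i) ^ p - (a i) ^ p - A ^ p) := by
  have hp0 : (0:ℝ) < p := lt_trans zero_lt_one hp1
  induction s using Finset.cons_induction with
  | empty => simp [Real.zero_rpow hp0.ne']
  | cons k s hk ih =>
    have hak : 0 ≤ a k := ha k (Finset.mem_cons_self k s)
    have ha' : ∀ i ∈ s, 0 ≤ a i := fun i hi => ha i (Finset.mem_cons.mpr (Or.inr hi))
    have hS : 0 ≤ ∑ i ∈ s, a i := Finset.sum_nonneg ha'
    rw [Finset.sum_cons, Finset.sum_cons, ← add_assoc]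
    have h3 := key3 hp1 hp2 hA hak hS
    have := ih ha'
    linarith

universe u

/-- Main inequality over an arbitrary finite index set. -/
lemma main_ineq {p : ℝ} (hp1 : 1 < p) (hp2 : p ≤ 2) {ι : Type u} [DecidableEq ι]
    (s : Finset ι) (a : ι → ℝ) (ha : ∀ i, 0 ≤ a i) :
    (∑ i ∈ s, a i) ^ p - ∑ i ∈ s, a i ^ p ≤
      ∑ i ∈ s, ∑ j ∈ s, (if i ≠ j then (a i + a j) ^ p - a i ^ p - a j ^ p else 0) := by
  have hp0 : (0:ℝ) < p := lt_trans zero_lt_one hp1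
  induction s using Finset.cons_induction with
  | empty => simp [Real.zero_rpow hp0.ne']
  | cons k s hk ih =>
    simp only [Finset.sum_cons]
    have hkk : (if k ≠ k then (a k + a k) ^ p - a k ^ p - a k ^ p else 0) = 0 := by simp
    have hrow : ∑ j ∈ s, (if k ≠ j then (a k + a j) ^ p - a k ^ p - a j ^ p else 0)
        = ∑ j ∈ s, ((a k + a j) ^ p - a j ^ p - a k ^ p) := by
      refine Finset.sum_congr rfl fun j hj => ?_
      rw [if_pos (by rintro rfl; exact hk hj)]
      ring
    have hcol : 0 ≤ ∑ i ∈ s, (if i ≠ k then (a i + a k) ^ p - a i ^ p - a k ^ p else 0) := by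
      refine Finset.sum_nonneg fun i hi => ?_
      rw [if_pos (by rintro rfl; exact hk hi)]
      have := bracket_nonneg hp1.le (ha i) (ha k)
      linarith
    have hsplit : ∑ i ∈ s, ((if i ≠ k then (a i + a k) ^ p - a i ^ p - a k ^ p else 0)
          + ∑ j ∈ s, (if i ≠ j then (a i + a j) ^ p - a i ^ p - a j ^ p else 0))
        = (∑ i ∈ s, (if i ≠ k then (a i + a k) ^ p - a i ^ p - a k ^ p else 0))
          + ∑ i ∈ s, ∑ j ∈ s, (if i ≠ j then (a i + a j) ^ p - a i ^ p - a j ^ p else 0) :=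
      Finset.sum_add_distrib
    rw [hkk, hrow, hsplit]
    have hg := gsum hp1 hp2 s a (fun i _ => ha i) (ha k)
    linarith

/-- elementary convexity inequality for powers `p ∈ (1,2]`,
with equality when at most one of the `a_i` is non-zero. -/
theorem stmt16 (p : ℝ) (hp1 : 1 < p) (hp2 : p ≤ 2) (ν : ℕ) (hν : 1 ≤ ν)
    (a : Fin ν → ℝ) (ha : ∀ i, 0 ≤ a i) :
    ((∑ i, a i) ^ p - ∑ i, a i ^ p ≤
      ∑ i, ∑ j, (if i ≠ j then (a i + a j) ^ p - a i ^ p - a j ^ p else 0)) ∧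
    ((∀ i j, a i ≠ 0 → a j ≠ 0 → i = j) →
      (∑ i, a i) ^ p - (∑ i, a i ^ p) =
        ∑ i, ∑ j, (if i ≠ j then (a i + a j) ^ p - a i ^ p - a j ^ p else 0)) := by

  have hp0 : (0:ℝ) < p := lt_trans zero_lt_one hp1
  constructor
  · exact main_ineq hp1 hp2 Finset.univ a ha
  · intro huniq
    have hrhs : ∑ i, ∑ j, (if i ≠ j then (a i + a j) ^ p - a i ^ p - a j ^ p else 0) = 0 := by
      refine Finset.sum_eq_zero fun i _ => Finset.sum_eq_zero fun j _ => ?_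
      by_cases hij : i = j
      · simp [hij]
      · rw [if_pos hij]
        by_cases hi : a i = 0
        · simp [hi, Real.zero_rpow hp0.ne']
        · have hj : a j = 0 := by
            by_contra hj
            exact hij (huniq i j hi hj)
          simp [hj, Real.zero_rpow hp0.ne']
    rw [hrhs]
    by_cases h0 : ∀ i, a i = 0
    · have h1 : ∑ i, a i = 0 := Finset.sum_eq_zero fun i _ => h0 i
      have h2 : ∑ i, a i ^ p = 0 :=
        Finset.sum_eq_zero fun i _ => by simp [h0 i, Real.zero_rpow hp0.ne']
      rw [h1, h2, Real.zero_rpow hp0.ne', sub_zero]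
    · push_neg at h0
      obtain ⟨i₀, hi₀⟩ := h0
      have hz : ∀ j, j ≠ i₀ → a j = 0 := by
        intro j hj
        by_contra hjne
        exact hj (huniq j i₀ hjne hi₀)
      have h1 : ∑ i, a i = a i₀ :=
        Finset.sum_eq_single i₀ (fun b _ hb => hz b hb) (fun h => absurd (Finset.mem_univ i₀) h)
      have h2 : ∑ i, a i ^ p = a i₀ ^ p := by
        refine Finset.sum_eq_single i₀ (fun b _ hb => ?_) (fun h => absurd (Finset.mem_univ i₀) h)
        simp [hz b hb, Real.zero_rpow hp0.ne']
      rw [h1, h2, sub_self]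

end
end
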